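/- arXiv:0906.2481 — 2 statements merged into one kernel-verified Lean document; each statement's English description precedes it below -/
import Mathlib

section
/- Let R' be the ℂ-algebra generated by w, x, z with relations zw = ζwz, xw = z - ζ²wx, xz = ζzx - w², where ζ is a primitive 6th root of unity. Then Y := w + x² satisfies Y² = xYx. -/
noncomputable section

abbrev F3 : Type := FreeAlgebra ℂ (Fin 3)

def Wf : F3 := FreeAlgebra.ι ℂ 0
def Xf : F3 := FreeAlgebra.ι ℂ 1
def Zf : F3 := FreeAlgebra.ι ℂ 2

/-- The defining relations zw = ζwz, xw = z - ζ²wx, xz = ζzx - w². -/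
inductive rel3 (ζ : ℂ) : F3 → F3 → Prop
  | r1 : rel3 ζ (Zf * Wf) (ζ • (Wf * Zf))
  | r2 : rel3 ζ (Xf * Wf) (Zf - ζ ^ 2 • (Wf * Xf))
  | r3 : rel3 ζ (Xf * Zf) (ζ • (Zf * Xf) - Wf ^ 2)

/-- R' = ℂ⟨w,x,z⟩ modulo the three relations. -/
abbrev R' (ζ : ℂ) : Type := RingQuot (rel3 ζ)

def w (ζ : ℂ) : R' ζ := RingQuot.mkRingHom (rel3 ζ) Wf
def x (ζ : ℂ) : R' ζ := RingQuot.mkRingHom (rel3 ζ) Xf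
def z (ζ : ℂ) : R' ζ := RingQuot.mkRingHom (rel3 ζ) Zf

theorem Y_sq_eq_xYx (ζ : ℂ) (hζ : ζ ^ 2 = ζ - 1) :
    let Y : R' ζ := w ζ + (x ζ) ^ 2
    Y ^ 2 = x ζ * Y * x ζ := by
  intro Y
  set W := w ζ with hW
  set X := x ζ with hX
  set Z := z ζ with hZ
  have hcoe : ∀ a : F3, RingQuot.mkAlgHom ℂ (rel3 ζ) a = RingQuot.mkRingHom (rel3 ζ) a := by
    intro a
    rw [← RingQuot.mkAlgHom_coe ℂ (rel3 ζ)]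
    rfl
  have hxw : X * W = Z - ζ ^ 2 • (W * X) := by
    have h := RingQuot.mkAlgHom_rel ℂ (rel3.r2 (ζ := ζ))
    simp only [map_mul, map_sub, map_smul, map_pow] at h
    simpa [hcoe, hW, hX, hZ, w, x, z] using h
  have hxz : X * Z = ζ • (Z * X) - W ^ 2 := by
    have h := RingQuot.mkAlgHom_rel ℂ (rel3.r3 (ζ := ζ))
    simp only [map_mul, map_sub, map_smul, map_pow] at h
    simpa [hcoe, hW, hX, hZ, w, x, z] using h
  have e1 : X * (W * X) = Z * X - ζ ^ 2 • (W * X ^ 2) := by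
    rw [← mul_assoc, hxw, sub_mul, smul_mul_assoc, mul_assoc, ← pow_two]
  have e2 : X ^ 2 * W = ζ • (Z * X) - W ^ 2 - ζ ^ 2 • (Z * X) + (ζ ^ 4) • (W * X ^ 2) := by
    calc X ^ 2 * W = X * (X * W) := by rw [pow_two, mul_assoc]
      _ = X * Z - ζ ^ 2 • (X * (W * X)) := by
          rw [hxw, mul_sub, mul_smul_comm]
      _ = ζ • (Z * X) - W ^ 2 - ζ ^ 2 • (Z * X - ζ ^ 2 • (W * X ^ 2)) := by rw [hxz, e1]
      _ = _ := by rw [smul_sub, smul_smul]; module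
  have key : W ^ 2 + W * X ^ 2 + X ^ 2 * W = X * (W * X) := by
    rw [e2, e1]
    match_scalars
    · ring
    · linear_combination (ζ ^ 2 + ζ + 1) * hζ
    · linear_combination -hζ
  calc Y ^ 2 = (W ^ 2 + W * X ^ 2 + X ^ 2 * W) + X ^ 2 * X ^ 2 := by
        show (W + X ^ 2) ^ 2 = _
        noncomm_ring
    _ = X * (W * X) + X ^ 2 * X ^ 2 := by rw [key]
    _ = X * Y * X := by show _ = X * (W + X ^ 2) * X; noncomm_ring
end
end

section
/- Let R' be the ℂ-algebra generated by w, x, z with relations zw = ζwz, xw = z - ζ²wx, xz = ζzx - w², where ζ is a primitive 6th root of unity. Then Y := w + x² satisfies YxY = x^5. -/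
noncomputable section

section lemmas
variable (ζ : ℂ)

lemma hw : w ζ = RingQuot.mkAlgHom ℂ (rel3 ζ) Wf :=
  (RingHom.congr_fun (RingQuot.mkAlgHom_coe ℂ (rel3 ζ)) Wf).symm
lemma hx : x ζ = RingQuot.mkAlgHom ℂ (rel3 ζ) Xf :=
  (RingHom.congr_fun (RingQuot.mkAlgHom_coe ℂ (rel3 ζ)) Xf).symm
lemma hz : z ζ = RingQuot.mkAlgHom ℂ (rel3 ζ) Zf :=
  (RingHom.congr_fun (RingQuot.mkAlgHom_coe ℂ (rel3 ζ)) Zf).symm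

lemma L3 : z ζ * w ζ = ζ • (w ζ * z ζ) := by
  have h := RingQuot.mkAlgHom_rel ℂ (rel3.r1 (ζ := ζ))
  simpa [map_mul, map_smul, hw, hx, hz] using h

lemma L1 : x ζ * w ζ = z ζ - ζ ^ 2 • (w ζ * x ζ) := by
  have h := RingQuot.mkAlgHom_rel ℂ (rel3.r2 (ζ := ζ))
  simpa [map_mul, map_smul, map_sub, hw, hx, hz] using h

lemma L2 : x ζ * z ζ = ζ • (z ζ * x ζ) - (w ζ) ^ 2 := by
  have h := RingQuot.mkAlgHom_rel ℂ (rel3.r3 (ζ := ζ))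
  simpa [map_mul, map_smul, map_sub, map_pow, hw, hx, hz] using h

lemma L3' (t : R' ζ) : z ζ * (w ζ * t) = ζ • (w ζ * (z ζ * t)) := by
  rw [← mul_assoc, L3, smul_mul_assoc, mul_assoc]

lemma L1' (t : R' ζ) : x ζ * (w ζ * t) = z ζ * t - ζ ^ 2 • (w ζ * (x ζ * t)) := by
  rw [← mul_assoc, L1, sub_mul, smul_mul_assoc, mul_assoc]

lemma L2' (t : R' ζ) : x ζ * (z ζ * t) = ζ • (z ζ * (x ζ * t)) - w ζ * (w ζ * t) := by
  rw [← mul_assoc, L2, sub_mul, smul_mul_assoc, mul_assoc, pow_two, mul_assoc]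

end lemmas

theorem YxY_eq_x_pow_five (ζ : ℂ) (hζ : ζ ^ 2 = ζ - 1) :
    let Y : R' ζ := w ζ + (x ζ) ^ 2
    Y * x ζ * Y = (x ζ) ^ 5 := by
  intro Y
  show (w ζ + x ζ ^ 2) * x ζ * (w ζ + x ζ ^ 2) = x ζ ^ 5
  simp only [pow_succ, pow_zero, one_mul, mul_add, add_mul, sub_mul, mul_sub,
    smul_mul_assoc, mul_smul_comm, smul_sub, smul_add, smul_smul, mul_assoc,
    L1, L2, L3, L1', L2', L3']
  match_scalars
  · linear_combination hζ
  · linear_combination (-ζ^2 - ζ) * hζ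
  · linear_combination ζ^2 * hζ
  · linear_combination (1 - ζ^3) * (1 + ζ) * hζ
  · ring1
end
end
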